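/- arXiv:1106.6099 — 2 statements merged into one kernel-verified Lean document; each statement's English description precedes it below -/
import Mathlib

section
/- Let S be a finite set of integers with min S ≥ 2. Then there exists a mixed hypergraph H on at most 2·max S − min S vertices that is a one-realization of S (feasible set S and each entry of the chromatic spectrum 0 or 1). -/
/-- A mixed hypergraph on vertex type `V`: families of C-edges and D-edges. -/
structure MixedHypergraph (V : Type*) where
  Cedges : Set (Set V)
  Dedges : Set (Set V)

/-- A strict `k`-coloring: a surjective coloring with `k` colors such that every
C-edge has two distinct vertices with a common color and every D-edge has two
distinct vertices with distinct colors. -/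
def IsStrictColoring {V : Type*} (H : MixedHypergraph V) (k : ℕ) (f : V → Fin k) : Prop :=
  Function.Surjective f ∧
  (∀ e ∈ H.Cedges, ∃ u ∈ e, ∃ v ∈ e, u ≠ v ∧ f u = f v) ∧
  (∀ e ∈ H.Dedges, ∃ u ∈ e, ∃ v ∈ e, u ≠ v ∧ f u ≠ f v)

/-- The feasible set of a mixed hypergraph. -/
def FeasibleSet {V : Type*} (H : MixedHypergraph V) : Set ℕ :=
  {k | ∃ f : V → Fin k, IsStrictColoring H k f}

/-- Two colorings induce the same partition of the vertex set. -/
def SamePartition {V : Type*} {k k' : ℕ} (f : V → Fin k) (g : V → Fin k') : Prop :=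
  ∀ u v, f u = f v ↔ g u = g v

/-- `H` is a one-realization of `S`: its feasible set is `S` and for each `k`
the partition induced by a strict `k`-coloring is unique. -/
def IsOneRealization {V : Type*} (H : MixedHypergraph V) (S : Set ℕ) : Prop :=
  FeasibleSet H = S ∧
  ∀ (k : ℕ) (f g : V → Fin k), IsStrictColoring H k f → IsStrictColoring H k g →
    SamePartition f g

/-!
Put `a = min S`, `b = max S`, `c = a - 2`, `d = b - a`. The hypergraph has a D-clique
`x₀, …, x_c, z` and pairs `pᵢ, qᵢ` for `i < d`. The C-edges `{z, pᵢ, qᵢ}` and `{x₀, pᵢ, qᵢ}`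
force, in a strict coloring, either `pᵢ ∼ qᵢ` (a class of its own) or `pᵢ ∼ z` and `qᵢ ∼ x₀`,
and the C-edges `{pᵢ, qᵢ, qⱼ}` (`i < j`) make `{i | pᵢ ∼ qᵢ}` an initial segment `{i < t}`.
Hence every strict coloring induces the canonical partition with `c + 2 + t` classes, and the
C-edge `{pᵢ₋₁, pᵢ, qᵢ}`, present exactly when `a + i ∉ S`, excludes `t = i`. The vertex count is
`c + 2 + 2d = 2b - a`.
-/

open Function

section Pairs

variable {α : Type*} {R : α → α → Prop} {A B C : α}

theorem Set.exists_mem_pair_iff (hR : ∀ a b, R a b → R b a) :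
    (∃ u ∈ ({A, B} : Set α), ∃ v ∈ ({A, B} : Set α), u ≠ v ∧ R u v) ↔ A ≠ B ∧ R A B := by
  constructor
  · rintro ⟨u, hu | hu, v, hv | hv, huv, h⟩ <;> subst u v
    exacts [absurd rfl huv, ⟨huv, h⟩, ⟨huv.symm, hR _ _ h⟩, absurd rfl huv]
  · rintro ⟨hAB, h⟩
    exact ⟨A, by simp, B, by simp, hAB, h⟩

theorem Set.exists_mem_triple_iff (hR : ∀ a b, R a b → R b a) :
    (∃ u ∈ ({A, B, C} : Set α), ∃ v ∈ ({A, B, C} : Set α), u ≠ v ∧ R u v) ↔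
      (A ≠ B ∧ R A B) ∨ (A ≠ C ∧ R A C) ∨ (B ≠ C ∧ R B C) := by
  constructor
  · rintro ⟨u, hu | hu | hu, v, hv | hv | hv, huv, h⟩ <;> subst u v <;>
      first | exact absurd rfl huv | tauto
  · rintro (⟨hne, h⟩ | ⟨hne, h⟩ | ⟨hne, h⟩)
    exacts [⟨A, by simp, B, by simp, hne, h⟩, ⟨A, by simp, C, by simp, hne, h⟩,
      ⟨B, by simp, C, by simp, hne, h⟩]

end Pairs

section Colorings

variable {V : Type*} {H : MixedHypergraph V} {k k' : ℕ} {f : V → Fin k} {g : V → Fin k'}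

theorem IsStrictColoring.apply_ne_of_pair_mem_Dedges {u v : V} (hf : IsStrictColoring H k f)
    (h : {u, v} ∈ H.Dedges) : f u ≠ f v :=
  ((Set.exists_mem_pair_iff fun _ _ => Ne.symm).1 (hf.2.2 _ h)).2

theorem IsStrictColoring.apply_eq_of_triple_mem_Cedges {u v w : V} (hf : IsStrictColoring H k f)
    (h : {u, v, w} ∈ H.Cedges) : f u = f v ∨ f u = f w ∨ f v = f w := by
  rcases (Set.exists_mem_triple_iff fun _ _ => Eq.symm).1 (hf.2.1 _ h) with h | h | h <;> simp [h]

theorem SamePartition.symm (h : SamePartition f g) : SamePartition g f :=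
  fun u v => (h u v).symm

theorem SamePartition.trans {k'' : ℕ} {h : V → Fin k''} (hfg : SamePartition f g)
    (hgh : SamePartition g h) : SamePartition f h :=
  fun u v => (hfg u v).trans (hgh u v)

theorem SamePartition.le (h : SamePartition f g) (hf : Surjective f) : k ≤ k' :=
  Fin.le_of_injective (g ∘ surjInv hf) fun a b hab => by
    simpa [surjInv_eq] using (h _ _).2 hab

theorem SamePartition.card_eq (h : SamePartition f g) (hf : Surjective f) (hg : Surjective g) :
    k = k' :=
  le_antisymm (h.le hf) (h.symm.le hg)

theorem IsStrictColoring.of_samePartition (hf : IsStrictColoring H k f) (hg : Surjective g)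
    (h : SamePartition f g) : IsStrictColoring H k' g := by
  refine ⟨hg, fun e he => ?_, fun e he => ?_⟩
  · obtain ⟨u, hu, v, hv, huv, hfuv⟩ := hf.2.1 e he
    exact ⟨u, hu, v, hv, huv, (h u v).1 hfuv⟩
  · obtain ⟨u, hu, v, hv, huv, hfuv⟩ := hf.2.2 e he
    exact ⟨u, hu, v, hv, huv, mt (h u v).2 hfuv⟩

theorem samePartition_of_retract (r : V → V) (R : Set V) (hr : ∀ v, r v ∈ R)
    (hfr : ∀ v, f (r v) = f v) (hgr : ∀ v, g (r v) = g v) (hf : Set.InjOn f R)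
    (hg : Set.InjOn g R) : SamePartition f g := by
  intro u v
  rw [← hfr u, ← hfr v, ← hgr u, ← hgr v, hf.eq_iff (hr u) (hr v), hg.eq_iff (hr u) (hr v)]

end Colorings

theorem isOneRealization_of_forall_samePartition {V ι : Type*} {H : MixedHypergraph V}
    {K : ι → ℕ} (hK : Injective K) (F : ∀ t, V → Fin (K t)) (hF : ∀ t, Surjective (F t))
    (hH : ∀ k (g : V → Fin k), IsStrictColoring H k g → ∃ t, SamePartition g (F t)) :
    IsOneRealization H (K '' {t | IsStrictColoring H (K t) (F t)}) := by
  refine ⟨Set.ext fun k => ⟨?_, ?_⟩, fun k f g hf hg => ?_⟩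
  · rintro ⟨g, hg⟩
    obtain ⟨t, ht⟩ := hH k g hg
    obtain rfl := ht.card_eq hg.1 (hF t)
    exact ⟨t, hg.of_samePartition (hF t) ht, rfl⟩
  · rintro ⟨t, ht, rfl⟩
    exact ⟨F t, ht⟩
  · obtain ⟨t, hft⟩ := hH k f hf
    obtain ⟨t', hgt'⟩ := hH k g hg
    obtain rfl : t = t' := hK ((hft.card_eq hf.1 (hF t)).symm.trans (hgt'.card_eq hg.1 (hF t')))
    exact hft.trans hgt'.symm

namespace MixedHypergraph

variable {V W : Type*}

def map (e : V ≃ W) (H : MixedHypergraph V) : MixedHypergraph W :=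
  ⟨Set.image e '' H.Cedges, Set.image e '' H.Dedges⟩

theorem isStrictColoring_map_iff (e : V ≃ W) (H : MixedHypergraph V) {k : ℕ} (f : W → Fin k) :
    IsStrictColoring (H.map e) k f ↔ IsStrictColoring H k (f ∘ e) := by
  simp only [IsStrictColoring, map, Set.forall_mem_image, Set.exists_mem_image, e.injective.ne_iff,
    e.surjective_comp, comp_apply]

end MixedHypergraph

theorem IsOneRealization.map {V W : Type*} {H : MixedHypergraph V} {S : Set ℕ}
    (h : IsOneRealization H S) (e : V ≃ W) : IsOneRealization (H.map e) S := by
  refine ⟨h.1 ▸ Set.ext fun k => ⟨?_, ?_⟩, fun k f g hf hg u v => ?_⟩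
  · rintro ⟨f, hf⟩
    exact ⟨f ∘ e, (H.isStrictColoring_map_iff e f).1 hf⟩
  · rintro ⟨f, hf⟩
    refine ⟨f ∘ e.symm, (H.isStrictColoring_map_iff e _).2 ?_⟩
    simpa [comp_def] using hf
  · simpa using h.2 k _ _ ((H.isStrictColoring_map_iff e f).1 hf)
      ((H.isStrictColoring_map_iff e g).1 hg) (e.symm u) (e.symm v)

theorem IsLowerSet.exists_mem_iff_val_lt {d : ℕ} {s : Set (Fin d)} (hs : IsLowerSet s) :
    ∃ t : Fin (d + 1), ∀ i : Fin d, i ∈ s ↔ (i : ℕ) < t := by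
  rcases hs.eq_univ_or_Iio with rfl | ⟨a, rfl⟩
  · exact ⟨Fin.last d, fun i => by simp⟩
  · exact ⟨a.castSucc, fun i => Iff.rfl⟩

namespace SpectrumHypergraph

abbrev V (c d : ℕ) := Fin (c + 1) ⊕ Fin d ⊕ Fin d ⊕ Unit

variable {c d : ℕ} {P : ℕ → Prop}

abbrev vx (m : Fin (c + 1)) : V c d := .inl m
abbrev vp (i : Fin d) : V c d := .inr (.inl i)
abbrev vq (i : Fin d) : V c d := .inr (.inr (.inl i))
abbrev vz : V c d := .inr (.inr (.inr ()))

def _root_.spectrumHypergraph (c d : ℕ) (P : ℕ → Prop) : MixedHypergraph (V c d) where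
  Cedges := {e | (∃ i, e = {vz, vp i, vq i}) ∨ (∃ i, e = {vx 0, vp i, vq i}) ∨
    (∃ i j : Fin d, i < j ∧ e = {vp i, vq i, vq j}) ∨
    (∃ i j : Fin d, (j : ℕ) = i + 1 ∧ ¬ P j ∧ e = {vp i, vp j, vq j})}
  Dedges := {e | (∃ m m', m ≠ m' ∧ e = {vx m, vx m'}) ∨ (∃ m, e = {vx m, vz}) ∨
    (∃ m i, e = {vx m, vp i}) ∨ (∃ i, e = {vz, vq i}) ∨ (∃ i j, i ≠ j ∧ e = {vp i, vq j})}

def color (t : ℕ) : V c d → ℕ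
  | .inl m => m
  | .inr (.inl i) => if i < t then c + 2 + i else c + 1
  | .inr (.inr (.inl i)) => if i < t then c + 2 + i else 0
  | .inr (.inr (.inr _)) => c + 1

theorem color_lt (t : ℕ) (v : V c d) : color t v < c + 2 + t := by
  rcases v with m | i | i | _ <;> grind [color]

def canonicalColoring (t : Fin (d + 1)) (v : V c d) : Fin (c + 2 + t) :=
  ⟨color t v, color_lt t v⟩

theorem surjective_canonicalColoring (t : Fin (d + 1)) :
    Surjective (canonicalColoring (c := c) t) := by
  rintro ⟨y, hy⟩
  rcases lt_trichotomy y (c + 1) with h | rfl | h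
  · exact ⟨vx ⟨y, h⟩, rfl⟩
  · exact ⟨vz, rfl⟩
  · refine ⟨vp ⟨y - (c + 2), by omega⟩, ?_⟩
    have : y - (c + 2) < t := by omega
    simp only [canonicalColoring, color, this, ↓reduceIte, Fin.mk.injEq]
    omega

theorem isStrictColoring_canonicalColoring_iff (hP0 : P 0) (hPd : P d) (t : Fin (d + 1)) :
    IsStrictColoring (spectrumHypergraph c d P) _ (canonicalColoring t) ↔ P t := by
  refine ⟨fun hf => ?_, fun hPt => ⟨surjective_canonicalColoring t, ?_, ?_⟩⟩
  · by_contra hPt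
    have ht0 : (t : ℕ) ≠ 0 := fun h => hPt (by rwa [h])
    have htd : (t : ℕ) ≠ d := fun h => hPt (by rwa [h])
    -- the gap edge at `t` is rainbow: its colors are `c + 1 + t`, `c + 1` and `0`
    have := hf.apply_eq_of_triple_mem_Cedges (u := vp ⟨t - 1, by omega⟩) (v := vp ⟨t, by omega⟩)
      (w := vq ⟨t, by omega⟩) (.inr (.inr (.inr ⟨_, _, by simp; omega, hPt, rfl⟩)))
    simp only [canonicalColoring, color, Fin.ext_iff] at this
    grind
  · rintro e (⟨i, rfl⟩ | ⟨i, rfl⟩ | ⟨i, j, hij, rfl⟩ | ⟨i, j, hij, hPj, rfl⟩) <;>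
      rw [Set.exists_mem_triple_iff fun _ _ => Eq.symm] <;>
      grind [canonicalColoring, color]
  · rintro e (⟨m, m', hm, rfl⟩ | ⟨m, rfl⟩ | ⟨m, i, rfl⟩ | ⟨i, rfl⟩ | ⟨i, j, hij, rfl⟩) <;>
      rw [Set.exists_mem_pair_iff fun _ _ => Ne.symm] <;>
      grind [canonicalColoring, color]

def retract (t : ℕ) : V c d → V c d
  | .inl m => vx m
  | .inr (.inl i) => if i < t then vp i else vz
  | .inr (.inr (.inl i)) => if i < t then vp i else vx 0
  | .inr (.inr (.inr _)) => vz

def representatives (t : ℕ) : Set (V c d) :=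
  {v | (∃ m, v = vx m) ∨ v = vz ∨ ∃ i : Fin d, i < t ∧ v = vp i}

theorem retract_mem (t : ℕ) (v : V c d) : retract t v ∈ representatives t := by
  rcases v with m | i | i | _ <;> grind [retract, representatives]

theorem canonicalColoring_retract (t : Fin (d + 1)) (v : V c d) :
    canonicalColoring t (retract t v) = canonicalColoring (c := c) t v := by
  rcases v with m | i | i | _ <;> grind [retract, canonicalColoring, color]

theorem injOn_canonicalColoring (t : Fin (d + 1)) :
    Set.InjOn (canonicalColoring (c := c) t) (representatives t) := by
  rintro _ (⟨m, rfl⟩ | rfl | ⟨i, hi, rfl⟩) _ (⟨m', rfl⟩ | rfl | ⟨j, hj, rfl⟩) h <;>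
    grind [canonicalColoring, color]

section StrictColoring

variable {k : ℕ} {g : V c d → Fin k} (hg : IsStrictColoring (spectrumHypergraph c d P) k g)
include hg

theorem apply_vx_injective : Injective (g ∘ vx) := fun m m' h =>
  by_contra fun hm => hg.apply_ne_of_pair_mem_Dedges (.inl ⟨m, m', hm, rfl⟩) h

theorem apply_vx_ne_vz (m : Fin (c + 1)) : g (vx m) ≠ g vz :=
  hg.apply_ne_of_pair_mem_Dedges (.inr (.inl ⟨m, rfl⟩))

theorem apply_vx_ne_vp (m : Fin (c + 1)) (i : Fin d) : g (vx m) ≠ g (vp i) :=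
  hg.apply_ne_of_pair_mem_Dedges (.inr (.inr (.inl ⟨m, i, rfl⟩)))

theorem apply_vz_ne_vq (i : Fin d) : g vz ≠ g (vq i) :=
  hg.apply_ne_of_pair_mem_Dedges (.inr (.inr (.inr (.inl ⟨i, rfl⟩))))

theorem apply_vp_ne_vq {i j : Fin d} (h : i ≠ j) : g (vp i) ≠ g (vq j) :=
  hg.apply_ne_of_pair_mem_Dedges (.inr (.inr (.inr (.inr ⟨i, j, h, rfl⟩))))

theorem apply_vp_eq_vz (i : Fin d) (h : g (vp i) ≠ g (vq i)) : g (vp i) = g vz := by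
  rcases hg.apply_eq_of_triple_mem_Cedges (.inl ⟨i, rfl⟩) with h' | h' | h'
  exacts [h'.symm, absurd h' (apply_vz_ne_vq hg i), absurd h' h]

theorem apply_vq_eq_vx (i : Fin d) (h : g (vp i) ≠ g (vq i)) : g (vq i) = g (vx 0) := by
  rcases hg.apply_eq_of_triple_mem_Cedges (.inr (.inl ⟨i, rfl⟩)) with h' | h' | h'
  exacts [absurd h' (apply_vx_ne_vp hg 0 i), h'.symm, absurd h' h]

theorem isLowerSet_setOf_apply_vp_eq_apply_vq : IsLowerSet {i : Fin d | g (vp i) = g (vq i)} := by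
  intro j i hij (hj : g (vp j) = g (vq j))
  show g (vp i) = g (vq i)
  rcases hij.lt_or_eq with hij | rfl
  · by_contra h
    rcases hg.apply_eq_of_triple_mem_Cedges (.inr (.inr (.inl ⟨i, j, hij, rfl⟩))) with h' | h' | h'
    · exact h h'
    · exact apply_vp_ne_vq hg hij.ne h'
    · exact apply_vx_ne_vp hg 0 j ((apply_vq_eq_vx hg i h).symm.trans (h'.trans hj.symm))
  · exact hj

variable {t : ℕ} (ht : ∀ i : Fin d, g (vp i) = g (vq i) ↔ (i : ℕ) < t)
include ht

theorem apply_retract (v : V c d) : g (retract t v) = g v := by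
  rcases v with m | i | i | _
  · rfl
  · by_cases hi : (i : ℕ) < t
    · simp only [retract, hi, ↓reduceIte]
    · simpa only [retract, hi, ↓reduceIte] using (apply_vp_eq_vz hg i (mt (ht i).1 hi)).symm
  · by_cases hi : (i : ℕ) < t
    · simpa only [retract, hi, ↓reduceIte] using (ht i).2 hi
    · simpa only [retract, hi, ↓reduceIte] using (apply_vq_eq_vx hg i (mt (ht i).1 hi)).symm
  · rfl

theorem injOn_apply_representatives : Set.InjOn g (representatives t) := by
  rintro _ (⟨m, rfl⟩ | rfl | ⟨i, hi, rfl⟩) _ (⟨m', rfl⟩ | rfl | ⟨j, hj, rfl⟩) h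
  · rw [apply_vx_injective hg h]
  · exact absurd h (apply_vx_ne_vz hg m)
  · exact absurd h (apply_vx_ne_vp hg m j)
  · exact absurd h.symm (apply_vx_ne_vz hg m')
  · rfl
  · exact absurd (h.trans ((ht j).2 hj)) (apply_vz_ne_vq hg j)
  · exact absurd h.symm (apply_vx_ne_vp hg m' i)
  · exact absurd (h.symm.trans ((ht i).2 hi)) (apply_vz_ne_vq hg i)
  · by_contra hij
    exact apply_vp_ne_vq hg (mt (congrArg vp) hij) (h.trans ((ht j).2 hj))

end StrictColoring

theorem exists_samePartition_canonicalColoring {k : ℕ} {g : V c d → Fin k}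
    (hg : IsStrictColoring (spectrumHypergraph c d P) k g) :
    ∃ t : Fin (d + 1), SamePartition g (canonicalColoring t) := by
  obtain ⟨t, ht⟩ := (isLowerSet_setOf_apply_vp_eq_apply_vq hg).exists_mem_iff_val_lt
  exact ⟨t, samePartition_of_retract (retract t) (representatives t) (retract_mem t)
    (apply_retract hg ht) (canonicalColoring_retract t) (injOn_apply_representatives hg ht)
    (injOn_canonicalColoring t)⟩

theorem card_V : Fintype.card (V c d) = c + 2 * d + 2 := by
  simp only [Fintype.card_sum, Fintype.card_fin, Fintype.card_unit]
  ring

theorem isOneRealization_spectrumHypergraph (hP0 : P 0) (hPd : P d) :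
    IsOneRealization (spectrumHypergraph c d P)
      ((fun t : Fin (d + 1) => c + 2 + (t : ℕ)) '' {t | P t}) := by
  have := isOneRealization_of_forall_samePartition (H := spectrumHypergraph c d P)
    (fun t t' h => Fin.ext (by simpa using h)) canonicalColoring surjective_canonicalColoring
    fun _ _ => exists_samePartition_canonicalColoring
  simpa only [isStrictColoring_canonicalColoring_iff hP0 hPd] using this

end SpectrumHypergraph

theorem Finset.coe_eq_image_min'_add (S : Finset ℕ) (hne : S.Nonempty) :
    (S : Set ℕ) = (fun t : Fin (S.max' hne - S.min' hne + 1) => S.min' hne + (t : ℕ)) ''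
      {t | S.min' hne + (t : ℕ) ∈ S} := by
  ext k
  refine ⟨fun hk => ?_, fun ⟨t, ht, hk⟩ => hk ▸ ht⟩
  have hk₁ := S.min'_le k hk
  have hk₂ := S.le_max' k hk
  refine ⟨⟨k - S.min' hne, by omega⟩, ?_, by simp only; omega⟩
  show S.min' hne + (k - S.min' hne) ∈ S
  rwa [Nat.add_sub_cancel' hk₁]

/-- for any finite set `S` of integers with `min S ≥ 2` there is a
mixed hypergraph on at most `2·max S - min S` vertices that is a one-realization
of `S`. -/
theorem exists_small_one_realization (S : Finset ℕ) (hne : S.Nonempty)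
    (h2 : 2 ≤ S.min' hne) :
    ∃ (m : ℕ) (H : MixedHypergraph (Fin m)),
      m ≤ 2 * S.max' hne - S.min' hne ∧ IsOneRealization H (↑S : Set ℕ) := by
  have hle : S.min' hne ≤ S.max' hne := S.min'_le_max' hne
  have hH := SpectrumHypergraph.isOneRealization_spectrumHypergraph
    (c := S.min' hne - 2) (d := S.max' hne - S.min' hne) (P := fun t => S.min' hne + t ∈ S)
    (by simpa using S.min'_mem hne) (by simpa [Nat.add_sub_cancel' hle] using S.max'_mem hne)
  rw [Nat.sub_add_cancel h2, ← S.coe_eq_image_min'_add hne] at hH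
  refine ⟨_, _, ?_, hH.map (Fintype.equivFin _)⟩
  rw [SpectrumHypergraph.card_V]
  omega
end

section
/- In Construction I, the restriction of H*_{n_1,n_2,...,n_s} to X' = {(x_2, x_2, x_3, ..., x_s) : x_j ∈ [n_j], j ∈ {2,...,s}} ∩ X* (i.e., the derived sub-hypergraph on the vertices of X* whose first two coordinates are equal) is isomorphic to H*_{n_2,n_3,...,n_s}. -/
/-- Vertex set of Construction I: `X* ⊆ [n₁] × ⋯ × [n_s]` consists of the diagonal
vertices `(i,…,i)` for `i ∈ [n_s - 1]`; for each `2 ≤ t ≤ s` and `n_t ≤ j ≤ n_{t-1}-1`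
the vertices `(j,…,j,n_t,…,n_s)` and `(j,…,j,1,…,1)` (`j` repeated `t-1` times);
and `(n₁,…,n_s)`.  (Index `t` of the paper corresponds to `t.val + 1` here.) -/
def XstarGen (s : ℕ) (n : Fin s → ℕ) : Set (Fin s → ℕ) :=
  {x | (∃ last : Fin s, (last : ℕ) + 1 = s ∧ ∃ i, 1 ≤ i ∧ i + 1 ≤ n last ∧ ∀ k, x k = i) ∨
       (∃ t u : Fin s, (u : ℕ) + 1 = (t : ℕ) ∧ ∃ j, n t ≤ j ∧ j + 1 ≤ n u ∧
         ((∀ k : Fin s, ((k : ℕ) < (t : ℕ) → x k = j) ∧ ((t : ℕ) ≤ (k : ℕ) → x k = n k)) ∨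
          (∀ k : Fin s, ((k : ℕ) < (t : ℕ) → x k = j) ∧ ((t : ℕ) ≤ (k : ℕ) → x k = 1)))) ∨
       (∀ k, x k = n k)}

/-- The Construction-I mixed hypergraph on a vertex set `X` of `s`-tuples:
D-edges are pairs of vertices differing in every coordinate, and C-edges are
triples of distinct vertices such that every coordinate takes exactly two
distinct values among the three. -/
def HstarOn {s : ℕ} (X : Set (Fin s → ℕ)) : MixedHypergraph X where
  Cedges := {e | ∃ u v w : X, u ≠ v ∧ u ≠ w ∧ v ≠ w ∧ e = {u, v, w} ∧
    ∀ k : Fin s, ({(u : Fin s → ℕ) k, (v : Fin s → ℕ) k, (w : Fin s → ℕ) k} : Finset ℕ).card = 2}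
  Dedges := {e | ∃ u v : X, e = {u, v} ∧ ∀ k : Fin s, (u : Fin s → ℕ) k ≠ (v : Fin s → ℕ) k}

/-- The set `X'` of vertices of `X*` whose first two coordinates are equal. -/
def XstarDiag (s : ℕ) (n : Fin s → ℕ) (hs : 2 ≤ s) : Set (Fin s → ℕ) :=
  XstarGen s n ∩ {x | x ⟨0, Nat.lt_of_lt_of_le Nat.zero_lt_two hs⟩ = x ⟨1, hs⟩}

/-- The parameter sequence `(n₂, n₃, …, n_s)`. -/
def shiftParams (s : ℕ) (n : Fin s → ℕ) : Fin (s - 1) → ℕ :=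
  fun i => n ⟨(i : ℕ) + 1, by have := i.isLt; omega⟩

/-!
Dropping the first coordinate identifies the vertices of `X*_{n₁,…,n_s}` with equal first two
coordinates with `X*_{n₂,…,n_s}`: the diagonal vertices and the vertices `(j,…,j,n_t,…,n_s)`,
`(j,…,j,1,…,1)` with `t ≥ 3` lose one copy of `j`, and `(n₂, n₂, n₃, …, n_s)` (the vertex with
`t = 2`, `j = n₂`) becomes the top vertex `(n₂,…,n_s)`. The vertex `(n₁,…,n_s)` and the vertices
`(j, 1, …, 1)` have distinct first two coordinates because `n₁ > n₂ ≥ 2`. Since the first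
coordinate of a vertex of `X'` repeats the second, both edge conditions of `H*`, being
coordinatewise, are unaffected.
-/

open Function

namespace HstarOn

variable {s r : ℕ} {X : Set (Fin s → ℕ)} {Y : Set (Fin r → ℕ)}

theorem image_mem_Cedges {f : X → Y} (hf : Injective f) {σ : Fin r → Fin s}
    (hσ : ∀ x, (f x : Fin r → ℕ) = (x : Fin s → ℕ) ∘ σ) {e : Set X}
    (he : e ∈ (HstarOn X).Cedges) : f '' e ∈ (HstarOn Y).Cedges := by
  obtain ⟨u, v, w, huv, huw, hvw, rfl, hcard⟩ := he
  refine ⟨f u, f v, f w, hf.ne huv, hf.ne huw, hf.ne hvw, ?_, fun k => ?_⟩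
  · simp only [Set.image_insert_eq, Set.image_singleton]
  · simpa only [hσ, comp_apply] using hcard (σ k)

theorem image_mem_Dedges {f : X → Y} {σ : Fin r → Fin s}
    (hσ : ∀ x, (f x : Fin r → ℕ) = (x : Fin s → ℕ) ∘ σ) {e : Set X}
    (he : e ∈ (HstarOn X).Dedges) : f '' e ∈ (HstarOn Y).Dedges := by
  obtain ⟨u, v, rfl, hne⟩ := he
  refine ⟨f u, f v, ?_, fun k => ?_⟩
  · simp only [Set.image_insert_eq, Set.image_singleton]
  · simpa only [hσ, comp_apply] using hne (σ k)

theorem image_mem_edges_iff_of_reindex (φ : X ≃ Y) {σ : Fin r → Fin s} {τ : Fin s → Fin r}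
    (hσ : ∀ x, (φ x : Fin r → ℕ) = (x : Fin s → ℕ) ∘ σ)
    (hτ : ∀ y, (φ.symm y : Fin s → ℕ) = (y : Fin r → ℕ) ∘ τ) :
    (∀ e : Set X, e ∈ (HstarOn X).Cedges ↔ φ '' e ∈ (HstarOn Y).Cedges) ∧
      (∀ e : Set X, e ∈ (HstarOn X).Dedges ↔ φ '' e ∈ (HstarOn Y).Dedges) := by
  refine ⟨fun e => ⟨image_mem_Cedges φ.injective hσ, fun he => ?_⟩,
    fun e => ⟨image_mem_Dedges hσ, fun he => ?_⟩⟩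
  · simpa only [φ.symm_image_image] using image_mem_Cedges φ.symm.injective hτ he
  · simpa only [φ.symm_image_image] using image_mem_Dedges hτ he

end HstarOn

/-- The vertices `(j,…,j,n_t,…,n_s)` and `(j,…,j,1,…,1)` of `X*` are the block vertices
`IsBlockVertex (t - 1) j z` for `z = n` and `z = 1`. -/
def IsBlockVertex {s : ℕ} (t j : ℕ) (z x : Fin s → ℕ) : Prop :=
  ∀ k : Fin s, ((k : ℕ) < t → x k = j) ∧ (t ≤ (k : ℕ) → x k = z k)

def dupHead {m : ℕ} (y : Fin (m + 1) → ℕ) : Fin (m + 2) → ℕ :=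
  Fin.cons (y 0) y

section dupHead

variable {m : ℕ}

@[simp] theorem dupHead_zero (y : Fin (m + 1) → ℕ) : dupHead y 0 = y 0 := rfl

@[simp] theorem dupHead_succ (y : Fin (m + 1) → ℕ) (k : Fin (m + 1)) :
    dupHead y k.succ = y k := rfl

theorem dupHead_tail {x : Fin (m + 2) → ℕ} (hx : x 0 = x 1) : dupHead (Fin.tail x) = x := by
  rw [dupHead, ← Fin.cons_self_tail x, Fin.tail_cons]
  exact congrArg₂ Fin.cons hx.symm rfl

theorem dupHead_eq_comp (y : Fin (m + 1) → ℕ) :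
    dupHead y = y ∘ (Fin.cons 0 id : Fin (m + 2) → Fin (m + 1)) := by
  ext k
  cases k using Fin.cases <;> rfl

theorem isBlockVertex_dupHead_succ_iff {t j : ℕ} (ht : 0 < t) {z : Fin (m + 2) → ℕ}
    {y : Fin (m + 1) → ℕ} :
    IsBlockVertex (t + 1) j z (dupHead y) ↔ IsBlockVertex t j (Fin.tail z) y := by
  refine ⟨fun h k => by simpa [Fin.tail] using h k.succ, fun h k => ?_⟩
  cases k using Fin.cases with
  | zero => simpa [Fin.tail] using (h 0).1 ht
  | succ k => simpa [Fin.tail] using h k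

end dupHead

section membership

variable {m : ℕ} {n : Fin (m + 2) → ℕ} {y : Fin (m + 1) → ℕ}

theorem mem_XstarGen_of_dupHead_mem (h01 : n 1 < n 0) (h1 : 1 < n 1)
    (hy : dupHead y ∈ XstarGen (m + 2) n) : y ∈ XstarGen (m + 1) (Fin.tail n) := by
  obtain ⟨last, hlast, i, hi1, hin, hyi⟩ | ⟨t, u, hut, j, hjt, hju, hblock⟩ | hyn := hy
  · obtain rfl : last = Fin.last (m + 1) := Fin.ext (by rw [Fin.val_last]; omega)
    exact Or.inl ⟨Fin.last m, rfl, i, hi1, hin, fun k => hyi k.succ⟩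
  · obtain ⟨t, rfl⟩ : ∃ t', Fin.succ t' = t := Fin.exists_succ_eq.2 (by rintro rfl; simp at hut)
    obtain rfl : u = t.castSucc := by
      rw [Fin.val_succ] at hut
      exact Fin.ext (by rw [Fin.val_castSucc]; omega)
    cases t using Fin.cases with
    | zero =>
      rcases hblock with hb | hb
      · exact Or.inr (Or.inr fun k => (hb k.succ).2 (by simp))
      · have hj : j = 1 := ((hb 0).1 (by simp)).symm.trans ((hb 1).2 (by simp))
        rw [Fin.succ_zero_eq_one] at hjt
        omega
    | succ t =>
      refine Or.inr (Or.inl ⟨t.succ, t.castSucc, rfl, j, hjt, ?_, ?_⟩)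
      · rwa [Fin.tail, Fin.succ_castSucc]
      · exact hblock.imp (isBlockVertex_dupHead_succ_iff (Nat.succ_pos _)).1
          (isBlockVertex_dupHead_succ_iff (z := fun _ => 1) (Nat.succ_pos _)).1
  · exact absurd ((hyn 0).symm.trans (hyn 1)) h01.ne'

theorem dupHead_mem_XstarGen (h01 : n 1 < n 0) (hy : y ∈ XstarGen (m + 1) (Fin.tail n)) :
    dupHead y ∈ XstarGen (m + 2) n := by
  obtain ⟨last, hlast, i, hi1, hin, hyi⟩ | ⟨t, u, hut, j, hjt, hju, hblock⟩ | hyn := hy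
  · obtain rfl : last = Fin.last m := Fin.ext (by rw [Fin.val_last]; omega)
    refine Or.inl ⟨Fin.last (m + 1), rfl, i, hi1, hin, fun k => ?_⟩
    cases k using Fin.cases <;> simp [hyi]
  · refine Or.inr (Or.inl ⟨t.succ, u.succ, by simp [← hut], j, hjt, hju, ?_⟩)
    have ht : 0 < (t : ℕ) := by omega
    exact hblock.imp (isBlockVertex_dupHead_succ_iff ht).2
      (isBlockVertex_dupHead_succ_iff (z := fun _ => 1) ht).2
  · refine Or.inr (Or.inl ⟨1, 0, rfl, n 1, le_rfl, h01, Or.inl fun k => ?_⟩)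
    cases k using Fin.cases with
    | zero => simp [hyn 0, Fin.tail]
    | succ k => simp [hyn k, Fin.tail]

end membership

def xstarDiagEquiv {m : ℕ} {n : Fin (m + 2) → ℕ} (h01 : n 1 < n 0) (h1 : 1 < n 1) :
    XstarDiag (m + 2) n (by omega) ≃ XstarGen (m + 1) (Fin.tail n) where
  toFun x := ⟨Fin.tail x.1,
    mem_XstarGen_of_dupHead_mem h01 h1 (by rw [dupHead_tail x.2.2]; exact x.2.1)⟩
  invFun y := ⟨dupHead y, dupHead_mem_XstarGen h01 y.2, rfl⟩
  left_inv x := Subtype.ext (dupHead_tail x.2.2)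
  right_inv _ := rfl

/-- the derived sub-hypergraph of `H*_{n₁,…,n_s}` on the set `X'` of
vertices of `X*` whose first two coordinates are equal is isomorphic to
`H*_{n₂,…,n_s}`: there is a bijection of vertex sets mapping C-edges onto C-edges
and D-edges onto D-edges. -/
theorem Hstar_derived_iso (s : ℕ) (hs : 2 ≤ s) (n : Fin s → ℕ)
    (hanti : StrictAnti n) (h2 : 2 ≤ n ⟨s - 1, by omega⟩) :
    ∃ φ : ↥(XstarDiag s n hs) ≃ ↥(XstarGen (s - 1) (shiftParams s n)),
      (∀ e : Set ↥(XstarDiag s n hs),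
        e ∈ (HstarOn (XstarDiag s n hs)).Cedges ↔
          φ '' e ∈ (HstarOn (XstarGen (s - 1) (shiftParams s n))).Cedges) ∧
      (∀ e : Set ↥(XstarDiag s n hs),
        e ∈ (HstarOn (XstarDiag s n hs)).Dedges ↔
          φ '' e ∈ (HstarOn (XstarGen (s - 1) (shiftParams s n))).Dedges) := by
  obtain ⟨m, rfl⟩ : ∃ m, s = m + 2 := ⟨s - 2, by omega⟩
  have h01 : n 1 < n 0 := hanti Fin.zero_lt_one
  have h1 : 1 < n 1 := lt_of_lt_of_le h2 (hanti.antitone (Fin.le_last 1))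
  exact ⟨xstarDiagEquiv h01 h1, HstarOn.image_mem_edges_iff_of_reindex (xstarDiagEquiv h01 h1)
    (σ := Fin.succ) (fun _ => rfl) (fun y => dupHead_eq_comp y.1)⟩
end
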